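/- Under the hypotheses of the central lemma (the two ℓ1-isometry bounds with δ ≤ 1/9 and existence of Ȳ with ||Ȳ_T||_1 ≤ 1/2, Ȳ_{T^⊥} ⪰ I_{T^⊥}), every feasible difference H = X − X_0 with X ⪰ 0 and A(X)=A(X_0) satisfies the cone condition ||H_{T^⊥}||_1 ≥ (0.94(1−δ)/(1+δ)) ||H_T||_op. -/

import Mathlib

open Matrix

/-- Nuclear norm (sum of singular values) of a real square matrix. -/
noncomputable def nucNorm {n : ℕ} (M : Matrix (Fin n) (Fin n) ℝ) : ℝ :=
  ∑ i, Real.sqrt ((Matrix.isHermitian_conjTranspose_mul_self M).eigenvalues i)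

/-- Spectral (operator) norm of a real square matrix. -/
noncomputable def opNorm {n : ℕ} (M : Matrix (Fin n) (Fin n) ℝ) : ℝ :=
  ‖LinearMap.toContinuousLinearMap (Matrix.toEuclideanLin M)‖

/-- Orthogonal projection onto `T^⊥`: `X ↦ (I − x₀x₀ᵀ) X (I − x₀x₀ᵀ)`. -/
noncomputable def TperpProj {n : ℕ} (x0 : Fin n → ℝ) (X : Matrix (Fin n) (Fin n) ℝ) :
    Matrix (Fin n) (Fin n) ℝ :=
  (1 - vecMulVec x0 x0) * X * (1 - vecMulVec x0 x0)

/-- Orthogonal projection onto `T`. -/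
noncomputable def TProj {n : ℕ} (x0 : Fin n → ℝ) (X : Matrix (Fin n) (Fin n) ℝ) :
    Matrix (Fin n) (Fin n) ℝ :=
  X - TperpProj x0 X

/-!
For `H = X − x₀x₀ᵀ` the measurements vanish, so those of `H_T` and `H_{T^⊥}` agree up to sign.
Since `H_T = x₀yᵀ + yx₀ᵀ` with `y = Hx₀ − ½(x₀ᵀHx₀)x₀`, the second isometry bound gives
`0.94(1−δ)‖H_T‖_op` as a lower bound for their ℓ₁ mass; since `H_{T^⊥} = X_{T^⊥} ⪰ 0`, the first
gives `(1+δ)‖H_{T^⊥}‖₁` as an upper bound.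
-/

section Projections

variable {n : ℕ} {x : Fin n → ℝ}

lemma one_sub_vecMulVec_self_mul_self (hx : x ⬝ᵥ x = 1) :
    (1 - vecMulVec x x) * vecMulVec x x = 0 := by
  rw [sub_mul, one_mul, vecMulVec_mul_vecMulVec, hx, one_smul, sub_self]

lemma TperpProj_sub_vecMulVec_self (hx : x ⬝ᵥ x = 1) (X : Matrix (Fin n) (Fin n) ℝ) :
    TperpProj x (X - vecMulVec x x) = TperpProj x X := by
  rw [TperpProj, TperpProj, mul_sub (1 - vecMulVec x x) X, one_sub_vecMulVec_self_mul_self hx,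
    sub_zero]

lemma posSemidef_TperpProj {X : Matrix (Fin n) (Fin n) ℝ} (hX : X.PosSemidef) :
    (TperpProj x X).PosSemidef := by
  have hsymm : (1 - vecMulVec x x)ᴴ = 1 - vecMulVec x x := by simp
  have := hX.mul_mul_conjTranspose_same (1 - vecMulVec x x)
  rwa [hsymm] at this

lemma TProj_eq (H : Matrix (Fin n) (Fin n) ℝ) :
    TProj x H = vecMulVec x x * H + H * vecMulVec x x - vecMulVec x x * H * vecMulVec x x := by
  rw [TProj, TperpProj]
  noncomm_ring

lemma TProj_eq_vecMulVec_add_vecMulVec {H : Matrix (Fin n) (Fin n) ℝ} (hH : Hᵀ = H) :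
    TProj x H = vecMulVec x (H *ᵥ x - ((x ⬝ᵥ H *ᵥ x) / 2) • x)
      + vecMulVec (H *ᵥ x - ((x ⬝ᵥ H *ᵥ x) / 2) • x) x := by
  have hvec : x ᵥ* H = H *ᵥ x := by rw [← mulVec_transpose, hH]
  rw [TProj_eq, vecMulVec_mul, mul_vecMulVec, vecMulVec_mul_vecMulVec, hvec,
    dotProduct_comm (H *ᵥ x)]
  simp only [vecMulVec_sub, sub_vecMulVec, vecMulVec_smul, smul_vecMulVec]
  module

lemma sum_abs_quadForm_TProj_eq_TperpProj {ι : Type*} [Fintype ι] (z : ι → Fin n → ℝ)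
    {H : Matrix (Fin n) (Fin n) ℝ} (hH : ∀ i, z i ⬝ᵥ H *ᵥ z i = 0) :
    ∑ i, |z i ⬝ᵥ TProj x H *ᵥ z i| = ∑ i, |z i ⬝ᵥ TperpProj x H *ᵥ z i| := by
  refine Finset.sum_congr rfl fun i _ => ?_
  rw [TProj, sub_mulVec, dotProduct_sub, hH i, zero_sub, abs_neg]

end Projections

theorem feasible_difference_cone_condition_general (n m : ℕ) (z : Fin m → Fin n → ℝ)
    (x0 : Fin n → ℝ) (hx0 : ∑ i, (x0 i) ^ 2 = 1) (δ : ℝ) (hδ0 : 0 ≤ δ)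
    (h1 : ∀ X : Matrix (Fin n) (Fin n) ℝ, X.PosSemidef →
      (1 / (m : ℝ)) * ∑ i, |z i ⬝ᵥ X.mulVec (z i)| ≤ (1 + δ) * nucNorm X)
    (h2 : ∀ y : Fin n → ℝ,
      0.94 * (1 - δ) * opNorm (vecMulVec x0 y + vecMulVec y x0) ≤
        (1 / (m : ℝ)) * ∑ i, |z i ⬝ᵥ (vecMulVec x0 y + vecMulVec y x0).mulVec (z i)|)
    (X : Matrix (Fin n) (Fin n) ℝ) (hX : X.PosSemidef)
    (hfeas : (fun i => z i ⬝ᵥ X.mulVec (z i)) =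
      (fun i => z i ⬝ᵥ (vecMulVec x0 x0).mulVec (z i))) :
    0.94 * (1 - δ) / (1 + δ) * opNorm (TProj x0 (X - vecMulVec x0 x0)) ≤
      nucNorm (TperpProj x0 (X - vecMulVec x0 x0)) := by
  have hx : x0 ⬝ᵥ x0 = 1 := by simpa [dotProduct, sq] using hx0
  have hsymm : (X - vecMulVec x0 x0)ᵀ = X - vecMulVec x0 x0 := by
    rw [transpose_sub, transpose_vecMulVec, ← conjTranspose_eq_transpose_of_trivial, hX.1]
  have hker : ∀ i, z i ⬝ᵥ (X - vecMulVec x0 x0) *ᵥ z i = 0 := fun i => by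
    rw [sub_mulVec, dotProduct_sub, congrFun hfeas i, sub_self]
  obtain ⟨y, hy⟩ : ∃ y, TProj x0 (X - vecMulVec x0 x0) = vecMulVec x0 y + vecMulVec y x0 :=
    ⟨_, TProj_eq_vecMulVec_add_vecMulVec hsymm⟩
  have lower := h2 y
  rw [← hy, sum_abs_quadForm_TProj_eq_TperpProj z hker] at lower
  have upper := h1 _ (posSemidef_TperpProj (x := x0) hX)
  rw [← TperpProj_sub_vecMulVec_self hx] at upper
  rw [div_mul_eq_mul_div, div_le_iff₀ (by linarith)]
  linarith

/-- Cone condition: under the hypotheses of the central lemma, every feasible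
difference `H = X − X₀` satisfies `‖H_{T^⊥}‖₁ ≥ (0.94(1−δ)/(1+δ)) ‖H_T‖_op`. -/
theorem feasible_difference_cone_condition (n m : ℕ) (z : Fin m → Fin n → ℝ)
    (x0 : Fin n → ℝ) (hx0 : ∑ i, (x0 i) ^ 2 = 1) (δ : ℝ) (hδ0 : 0 ≤ δ) (hδ : δ ≤ 1 / 9)
    (h1 : ∀ X : Matrix (Fin n) (Fin n) ℝ, X.PosSemidef →
      (1 / (m : ℝ)) * ∑ i, |z i ⬝ᵥ X.mulVec (z i)| ≤ (1 + δ) * nucNorm X)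
    (h2 : ∀ y : Fin n → ℝ,
      0.94 * (1 - δ) * opNorm (vecMulVec x0 y + vecMulVec y x0) ≤
        (1 / (m : ℝ)) * ∑ i, |z i ⬝ᵥ (vecMulVec x0 y + vecMulVec y x0).mulVec (z i)|)
    (lam : Fin m → ℝ)
    (hYT : nucNorm (TProj x0 (∑ i, lam i • vecMulVec (z i) (z i))) ≤ 1 / 2)
    (hYTperp : ∀ u : Fin n → ℝ, u ⬝ᵥ x0 = 0 →
      ∑ j, (u j) ^ 2 ≤ u ⬝ᵥ (∑ i, lam i • vecMulVec (z i) (z i)).mulVec u)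
    (X : Matrix (Fin n) (Fin n) ℝ) (hX : X.PosSemidef)
    (hfeas : (fun i => z i ⬝ᵥ X.mulVec (z i)) =
      (fun i => z i ⬝ᵥ (vecMulVec x0 x0).mulVec (z i))) :
    0.94 * (1 - δ) / (1 + δ) * opNorm (TProj x0 (X - vecMulVec x0 x0)) ≤
      nucNorm (TperpProj x0 (X - vecMulVec x0 x0)) :=
  feasible_difference_cone_condition_general n m z x0 hx0 δ hδ0 h1 h2 X hX hfeas
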